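/- arXiv:0712.2923 — 2 statements merged into one kernel-verified Lean document; each statement's English description precedes it below -/
import Mathlib

section
/- Let V ∈ 𝒞 be finite and nonempty, let x ∈ adj(V), and let f : ℤ^d → ℝ. (a) If f(x) ≤ min_{y∈V} f(y), then L_n f(x) ≤ min_{y∈V} L_n f(y). (b) If f(x) ≥ max_{y∈V} f(y), then U_n f(x) ≥ max_{y∈V} U_n f(y). -/
open Set

/-- A connection (connected class) on `ℤ^d`. -/
def IsConnection {d : ℕ} (C : Set (Set (Fin d → ℤ))) : Prop :=
  ∅ ∈ C ∧ (∀ x : Fin d → ℤ, {x} ∈ C) ∧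
    ∀ S : Set (Set (Fin d → ℤ)), (∀ A ∈ S, A ∈ C) → (⋂₀ S).Nonempty → ⋃₀ S ∈ C

/-- A connection on `ℤ^d` satisfying the additional axioms (α), (β), (γ). -/
def GoodConnection {d : ℕ} (C : Set (Set (Fin d → ℤ))) : Prop :=
  IsConnection C ∧
  Set.univ ∈ C ∧
  (∀ (a : Fin d → ℤ), ∀ V ∈ C, (fun x => a + x) '' V ∈ C) ∧
  (∀ V ∈ C, ∀ W ∈ C, V ⊂ W → ∃ x ∈ W \ V, insert x V ∈ C)

/-- `𝒩_n(x)`: the connected sets of cardinality `n+1` containing `x`. -/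
def Nn {d : ℕ} (C : Set (Set (Fin d → ℤ))) (n : ℕ) (x : Fin d → ℤ) :
    Set (Set (Fin d → ℤ)) :=
  {V | V ∈ C ∧ x ∈ V ∧ V.encard = (n : ℕ∞) + 1}

/-- The operator `L_n`. -/
noncomputable def Ln {d : ℕ} (C : Set (Set (Fin d → ℤ))) (n : ℕ)
    (f : (Fin d → ℤ) → ℝ) (x : Fin d → ℤ) : ℝ :=
  sSup ((fun V => sInf (f '' V)) '' Nn C n x)

/-- The operator `U_n`. -/
noncomputable def Un {d : ℕ} (C : Set (Set (Fin d → ℤ))) (n : ℕ)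
    (f : (Fin d → ℤ) → ℝ) (x : Fin d → ℤ) : ℝ :=
  sInf ((fun V => sSup (f '' V)) '' Nn C n x)

/-- The set of points adjacent to `V`. -/
def adjSet {d : ℕ} (C : Set (Set (Fin d → ℤ))) (V : Set (Fin d → ℤ)) :
    Set (Fin d → ℤ) :=
  {x | x ∉ V ∧ insert x V ∈ C}

/-- `V` is a local maximum set of `f`. -/
def IsLocalMaxSet {d : ℕ} (C : Set (Set (Fin d → ℤ))) (f : (Fin d → ℤ) → ℝ)
    (V : Set (Fin d → ℤ)) : Prop :=
  V ∈ C ∧ V.Finite ∧ V.Nonempty ∧ ∀ y ∈ adjSet C V, ∀ z ∈ V, f y < f z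

/-- `V` is a local minimum set of `f`. -/
def IsLocalMinSet {d : ℕ} (C : Set (Set (Fin d → ℤ))) (f : (Fin d → ℤ) → ℝ)
    (V : Set (Fin d → ℤ)) : Prop :=
  V ∈ C ∧ V.Finite ∧ V.Nonempty ∧ ∀ y ∈ adjSet C V, ∀ z ∈ V, f z < f y

lemma real_sInf_neg (s : Set ℝ) : sInf (-s) = -sSup s := by
  rw [Real.sInf_def, neg_neg]

lemma conn_union_mem {d : ℕ} {C : Set (Set (Fin d → ℤ))} (hC : IsConnection C)
    {A B : Set (Fin d → ℤ)} (hA : A ∈ C) (hB : B ∈ C) (h : (A ∩ B).Nonempty) :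
    A ∪ B ∈ C := by
  have := hC.2.2 {A, B} (by rintro X (rfl | rfl) <;> assumption)
    (by rw [Set.sInter_pair]; exact h)
  rwa [Set.sUnion_pair] at this

lemma conn_grow {d : ℕ} {C : Set (Set (Fin d → ℤ))} (hC : GoodConnection C) :
    ∀ (k : ℕ) (A U : Set (Fin d → ℤ)), A ∈ C → U ∈ C → A ⊆ U → A.Finite →
    A.encard + k ≤ U.encard →
    ∃ B ∈ C, A ⊆ B ∧ B ⊆ U ∧ B.encard = A.encard + k := by
  intro k
  induction k with
  | zero => intro A U hA hU hAU _ _; exact ⟨A, hA, Subset.rfl, hAU, by simp⟩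
  | succ k ih =>
    intro A U hA hU hAU hAfin hk
    obtain ⟨m, hm⟩ : ∃ m : ℕ, A.encard = m :=
      ⟨hAfin.toFinset.card, hAfin.encard_eq_coe_toFinset_card⟩
    have hk' : A.encard + (k : ℕ∞) ≤ U.encard :=
      le_trans (add_le_add le_rfl (by exact_mod_cast Nat.le_succ k)) hk
    obtain ⟨B, hB, hAB, hBU, hBcard⟩ := ih A U hA hU hAU hAfin hk'
    have hlt : B.encard < U.encard := by
      refine lt_of_lt_of_le ?_ hk
      rw [hBcard, hm]
      exact_mod_cast Nat.lt_succ_self (m + k)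
    have hss : B ⊂ U := ssubset_of_subset_of_ne hBU
      (fun h => by rw [h] at hlt; exact lt_irrefl _ hlt)
    obtain ⟨z, hz, hins⟩ := hC.2.2.2 B hB U hU hss
    refine ⟨insert z B, hins, hAB.trans (Set.subset_insert _ _),
      Set.insert_subset hz.1 hBU, ?_⟩
    rw [Set.encard_insert_of_notMem hz.2, hBcard, hm]
    push_cast
    ring

lemma mem_Nn_facts {d : ℕ} {C : Set (Set (Fin d → ℤ))} {n : ℕ} {x : Fin d → ℤ}
    {W : Set (Fin d → ℤ)} (hW : W ∈ Nn C n x) : W.Finite ∧ x ∈ W := by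
  have h : W.encard = ((n + 1 : ℕ) : ℕ∞) := by rw [hW.2.2]; push_cast; ring
  exact ⟨Set.finite_of_encard_eq_coe h, hW.2.1⟩

lemma Nn_nonempty {d : ℕ} (hd : 1 ≤ d) {C : Set (Set (Fin d → ℤ))}
    (hC : GoodConnection C) (n : ℕ) (x : Fin d → ℤ) : (Nn C n x).Nonempty := by
  have hinf : Infinite (Fin d → ℤ) := by
    have : Nonempty (Fin d) := ⟨⟨0, hd⟩⟩
    exact Infinite.of_injective (fun z : ℤ => fun _ => z)
      (fun a b h => by simpa using congrFun h (Classical.arbitrary (Fin d)))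
  obtain ⟨B, hB, hxB, _, hcard⟩ := conn_grow hC n {x} Set.univ (hC.1.2.1 x)
    hC.2.1 (Set.subset_univ _) (Set.finite_singleton x)
    (by rw [Set.encard_univ]; simp)
  exact ⟨B, hB, hxB rfl, by rw [hcard, Set.encard_singleton]; ring⟩

lemma Ln_bddAbove {d : ℕ} (C : Set (Set (Fin d → ℤ))) (n : ℕ)
    (f : (Fin d → ℤ) → ℝ) (x : Fin d → ℤ) :
    f x ∈ upperBounds ((fun V => sInf (f '' V)) '' Nn C n x) := by
  rintro a ⟨W, hW, rfl⟩
  obtain ⟨hfin, hxW⟩ := mem_Nn_facts hW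
  exact csInf_le (hfin.image f).bddBelow ⟨x, hxW, rfl⟩

lemma Ln_le_adj {d : ℕ} (hd : 1 ≤ d) {C : Set (Set (Fin d → ℤ))}
    (hC : GoodConnection C) (n : ℕ) (f : (Fin d → ℤ) → ℝ)
    {V : Set (Fin d → ℤ)} (hV : V ∈ C) {x : Fin d → ℤ} (hx : x ∈ adjSet C V)
    (hfx : ∀ y ∈ V, f x ≤ f y) : ∀ y ∈ V, Ln C n f x ≤ Ln C n f y := by
  intro y hy
  have hne := Nn_nonempty hd hC n x
  apply csSup_le (hne.image _)
  rintro a ⟨W, hW, rfl⟩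
  obtain ⟨hWfin, hxW⟩ := mem_Nn_facts hW
  -- U = W ∪ insert x V ∈ C
  have hU : W ∪ insert x V ∈ C :=
    conn_union_mem hC.1 hW.1 hx.2 ⟨x, hxW, Set.mem_insert _ _⟩
  have hyU : y ∈ W ∪ insert x V := Or.inr (Set.mem_insert_of_mem _ hy)
  have hcard : ({y} : Set (Fin d → ℤ)).encard + (n : ℕ∞) ≤ (W ∪ insert x V).encard := by
    rw [Set.encard_singleton]
    calc (1 : ℕ∞) + n = W.encard := by rw [hW.2.2]; ring
    _ ≤ _ := Set.encard_le_encard Set.subset_union_left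
  obtain ⟨B, hB, hyB, hBU, hBcard⟩ := conn_grow hC n {y} (W ∪ insert x V)
    (hC.1.2.1 y) hU (Set.singleton_subset_iff.mpr hyU) (Set.finite_singleton y) hcard
  have hBmem : B ∈ Nn C n y := ⟨hB, hyB rfl, by
    rw [hBcard, Set.encard_singleton]; ring⟩
  have hBfin : B.Finite := (mem_Nn_facts hBmem).1
  -- sInf (f '' W) ≤ sInf (f '' B)
  have h1 : sInf (f '' W) ≤ sInf (f '' B) := by
    apply le_csInf ((hBmem.2.1 |> Set.nonempty_of_mem).image f)
    rintro b ⟨u, hu, rfl⟩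
    rcases hBU hu with hu | hu
    · exact csInf_le (hWfin.image f).bddBelow ⟨u, hu, rfl⟩
    · have hxle : f x ≤ f u := by
        rcases hu with rfl | hu
        · exact le_rfl
        · exact hfx u hu
      exact le_trans (csInf_le (hWfin.image f).bddBelow ⟨x, hxW, rfl⟩) hxle
  exact h1.trans (le_csSup ⟨f y, Ln_bddAbove C n f y⟩ ⟨B, hBmem, rfl⟩)

lemma Un_eq_neg_Ln {d : ℕ} (C : Set (Set (Fin d → ℤ))) (n : ℕ)
    (f : (Fin d → ℤ) → ℝ) (x : Fin d → ℤ) :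
    Un C n f x = -Ln C n (fun w => -f w) x := by
  unfold Un Ln
  rw [← real_sInf_neg]
  congr 1
  have key : ∀ W : Set (Fin d → ℤ),
      sInf ((fun w => -f w) '' W) = -sSup (f '' W) := by
    intro W
    have himg : (fun w => -f w) '' W = -(f '' W) := by
      ext b
      simp only [Set.mem_neg, Set.mem_image]
      constructor <;> rintro ⟨w, hw, h⟩ <;> exact ⟨w, hw, by linarith⟩
    rw [himg, real_sInf_neg]
  ext a
  simp only [Set.mem_neg, Set.mem_image]
  constructor
  · rintro ⟨W, hW, rfl⟩
    exact ⟨W, hW, by rw [key]⟩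
  · rintro ⟨W, hW, h⟩
    refine ⟨W, hW, ?_⟩
    rw [key] at h
    linarith


/-- Let `V ∈ 𝒞` be finite and nonempty and `x ∈ adj(V)`.
(a) If `f(x) ≤ min_{y∈V} f(y)` then `L_n f(x) ≤ min_{y∈V} L_n f(y)`.
(b) If `f(x) ≥ max_{y∈V} f(y)` then `U_n f(x) ≥ max_{y∈V} U_n f(y)`. -/
theorem Ln_Un_monotone_adjacent {d : ℕ} (hd : 1 ≤ d)
    (C : Set (Set (Fin d → ℤ))) (hC : GoodConnection C)
    (n : ℕ) (hn : 1 ≤ n) (f : (Fin d → ℤ) → ℝ)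
    (V : Set (Fin d → ℤ)) (hV : V ∈ C) (hVfin : V.Finite) (hVne : V.Nonempty)
    (x : Fin d → ℤ) (hx : x ∈ adjSet C V) :
    ((∀ y ∈ V, f x ≤ f y) → ∀ y ∈ V, Ln C n f x ≤ Ln C n f y) ∧
    ((∀ y ∈ V, f y ≤ f x) → ∀ y ∈ V, Un C n f y ≤ Un C n f x) := by

  constructor
  · exact fun h => Ln_le_adj hd hC n f hV hx h
  · intro h y hy
    have := Ln_le_adj hd hC n (fun w => -f w) hV hx
      (fun z hz => neg_le_neg (h z hz)) y hy
    rw [Un_eq_neg_Ln, Un_eq_neg_Ln]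
    linarith
end

section
/- The compositions L_n∘U_n and U_n∘L_n are idempotent: for every f : ℤ^d → ℝ, (L_n∘U_n∘L_n∘U_n)(f) = (L_n∘U_n)(f) and (U_n∘L_n∘U_n∘L_n)(f) = (U_n∘L_n)(f). -/
open Set

section Aux
variable {d : ℕ} {C : Set (Set (Fin d → ℤ))} {n : ℕ} {f g : (Fin d → ℤ) → ℝ}

lemma Nn_finite' {x V} (hV : V ∈ Nn C n x) : V.Finite := by
  apply Set.finite_of_encard_eq_coe (k := n + 1)
  rw [hV.2.2]; push_cast; rfl

lemma exists_Nn' (hd : 1 ≤ d) (hC : GoodConnection C) (x : Fin d → ℤ) :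
    ∃ V, V ∈ Nn C n x := by
  suffices h : ∀ k : ℕ, ∃ V ∈ C, x ∈ V ∧ V.encard = (k : ℕ∞) + 1 by
    obtain ⟨V, h1, h2, h3⟩ := h n; exact ⟨V, h1, h2, h3⟩
  intro k
  induction k with
  | zero => exact ⟨{x}, hC.1.2.1 x, rfl, by simp⟩
  | succ k ih =>
    obtain ⟨V, hV, hxV, hcard⟩ := ih
    have hfin : V.Finite :=
      Set.finite_of_encard_eq_coe (k := k + 1) (by rw [hcard]; push_cast; rfl)
    haveI : Nonempty (Fin d) := ⟨⟨0, hd⟩⟩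
    have hne : V ≠ univ := by
      intro h; rw [h] at hfin; exact Set.infinite_univ hfin
    obtain ⟨y, hy, hins⟩ := hC.2.2.2 V hV univ hC.2.1 (Set.ssubset_univ_iff.mpr hne)
    refine ⟨insert y V, hins, mem_insert_of_mem _ hxV, ?_⟩
    rw [Set.encard_insert_of_notMem hy.2, hcard]
    push_cast; ring

lemma LnS_nonempty (hd : 1 ≤ d) (hC : GoodConnection C) (x : Fin d → ℤ) :
    ((fun V => sInf (f '' V)) '' Nn C n x).Nonempty :=
  (Set.Nonempty.image _ (exists_Nn' hd hC x))

lemma UnS_nonempty (hd : 1 ≤ d) (hC : GoodConnection C) (x : Fin d → ℤ) :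
    ((fun V => sSup (f '' V)) '' Nn C n x).Nonempty :=
  (Set.Nonempty.image _ (exists_Nn' hd hC x))

lemma sInf_le_fx {x V} (hV : V ∈ Nn C n x) : sInf (f '' V) ≤ f x :=
  csInf_le ((Nn_finite' hV).image f).bddBelow ⟨x, hV.2.1, rfl⟩

lemma fx_le_sSup {x V} (hV : V ∈ Nn C n x) : f x ≤ sSup (f '' V) :=
  le_csSup ((Nn_finite' hV).image f).bddAbove ⟨x, hV.2.1, rfl⟩

lemma LnS_bddAbove (x : Fin d → ℤ) :
    BddAbove ((fun V => sInf (f '' V)) '' Nn C n x) := by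
  refine ⟨f x, ?_⟩
  rintro a ⟨V, hV, rfl⟩
  exact sInf_le_fx hV

lemma UnS_bddBelow (x : Fin d → ℤ) :
    BddBelow ((fun V => sSup (f '' V)) '' Nn C n x) := by
  refine ⟨f x, ?_⟩
  rintro a ⟨V, hV, rfl⟩
  exact fx_le_sSup hV

lemma sInf_le_Ln {x V} (hV : V ∈ Nn C n x) : sInf (f '' V) ≤ Ln C n f x :=
  le_csSup (LnS_bddAbove x) ⟨V, hV, rfl⟩

lemma Un_le_sSup {x V} (hV : V ∈ Nn C n x) : Un C n f x ≤ sSup (f '' V) :=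
  csInf_le (UnS_bddBelow x) ⟨V, hV, rfl⟩

lemma Ln_le_self (hd : 1 ≤ d) (hC : GoodConnection C) (x : Fin d → ℤ) :
    Ln C n f x ≤ f x := by
  apply csSup_le (LnS_nonempty hd hC x)
  rintro a ⟨V, hV, rfl⟩
  exact sInf_le_fx hV

lemma self_le_Un (hd : 1 ≤ d) (hC : GoodConnection C) (x : Fin d → ℤ) :
    f x ≤ Un C n f x := by
  apply le_csInf (UnS_nonempty hd hC x)
  rintro a ⟨V, hV, rfl⟩
  exact fx_le_sSup hV

lemma Ln_mono (hd : 1 ≤ d) (hC : GoodConnection C)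
    (h : ∀ y, f y ≤ g y) (x : Fin d → ℤ) : Ln C n f x ≤ Ln C n g x := by
  apply csSup_le (LnS_nonempty hd hC x)
  rintro a ⟨V, hV, rfl⟩
  refine le_trans ?_ (sInf_le_Ln hV)
  apply le_csInf (Set.Nonempty.image g ⟨x, hV.2.1⟩)
  rintro b ⟨y, hy, rfl⟩
  exact le_trans (csInf_le ((Nn_finite' hV).image f).bddBelow ⟨y, hy, rfl⟩) (h y)

lemma Un_mono (hd : 1 ≤ d) (hC : GoodConnection C)
    (h : ∀ y, f y ≤ g y) (x : Fin d → ℤ) : Un C n f x ≤ Un C n g x := by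
  apply le_csInf (UnS_nonempty hd hC x)
  rintro a ⟨V, hV, rfl⟩
  refine le_trans (Un_le_sSup hV) ?_
  apply csSup_le (Set.Nonempty.image f ⟨x, hV.2.1⟩)
  rintro b ⟨y, hy, rfl⟩
  exact le_trans (h y) (le_csSup ((Nn_finite' hV).image g).bddAbove ⟨y, hy, rfl⟩)

lemma Ln_le_LnLn (hd : 1 ≤ d) (hC : GoodConnection C) (x : Fin d → ℤ) :
    Ln C n f x ≤ Ln C n (Ln C n f) x := by
  apply csSup_le (LnS_nonempty hd hC x)
  rintro a ⟨V, hV, rfl⟩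
  refine le_trans ?_ (sInf_le_Ln (f := Ln C n f) hV)
  apply le_csInf (Set.Nonempty.image _ ⟨x, hV.2.1⟩)
  rintro b ⟨y, hy, rfl⟩
  exact sInf_le_Ln ⟨hV.1, hy, hV.2.2⟩

lemma UnUn_le_Un (hd : 1 ≤ d) (hC : GoodConnection C) (x : Fin d → ℤ) :
    Un C n (Un C n f) x ≤ Un C n f x := by
  apply le_csInf (UnS_nonempty hd hC x)
  rintro a ⟨V, hV, rfl⟩
  refine le_trans (Un_le_sSup (f := Un C n f) hV) ?_
  apply csSup_le (Set.Nonempty.image _ ⟨x, hV.2.1⟩)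
  rintro b ⟨y, hy, rfl⟩
  exact Un_le_sSup ⟨hV.1, hy, hV.2.2⟩

end Aux

/-- `L_n∘U_n` and `U_n∘L_n` are idempotent. -/
theorem LnUn_UnLn_idempotent {d : ℕ} (hd : 1 ≤ d)
    (C : Set (Set (Fin d → ℤ))) (hC : GoodConnection C)
    (n : ℕ) (hn : 1 ≤ n) (f : (Fin d → ℤ) → ℝ) :
    Ln C n (Un C n (Ln C n (Un C n f))) = Ln C n (Un C n f) ∧
    Un C n (Ln C n (Un C n (Ln C n f))) = Un C n (Ln C n f) := by
  constructor
  · funext x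
    apply le_antisymm
    · apply Ln_mono hd hC (fun y => ?_) x
      exact le_trans
        (Un_mono hd hC (fun z => Ln_le_self hd hC z) y)
        (UnUn_le_Un hd hC y)
    · exact le_trans (Ln_le_LnLn hd hC x)
        (Ln_mono hd hC (fun y => self_le_Un hd hC y) x)
  · funext x
    apply le_antisymm
    · exact le_trans
        (Un_mono hd hC (fun y => Ln_le_self hd hC y) x)
        (UnUn_le_Un hd hC x)
    · apply Un_mono hd hC (fun y => ?_) x
      exact le_trans (Ln_le_LnLn hd hC y)
        (Ln_mono hd hC (fun z => self_le_Un hd hC z) y)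
end
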